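/- Let ⟨A, ∧, ∨, ¬, ∼̇, 0, 1⟩ be an algebra where ⟨A, ∧, ∨, 0, 1⟩ is a bounded distributive lattice satisfying (B1)–(B10). Define ∼x := (x ∨ ¬x) ∧ ∼̇x and ∇x := ¬¬x. Then ⟨A, ∧, ∨, ∼, ∇, 1⟩ is a 4-valued modal algebra, i.e., it satisfies: x ∧ (x ∨ y) = x; x ∧ (y ∨ z) = (z ∧ x) ∨ (y ∧ x); ∼∼x = x; ∼(x ∨ y) = ∼x ∧ ∼y; ∼x ∨ ∇x = 1; x ∧ ∼x = ∼x ∧ ∇x. -/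

import Mathlib

/-!
(B9) with `y = 1` gives `∼̇1 = 0`, hence `¬0 = 1` by (B4). Then both negations behave as
complements on each other's images: `¬x` has the two complements `¬¬x` and `∼̇¬x`, and `∼̇x` has
`∼̇∼̇x` and `¬∼̇x`, so these coincide and each is involutive on the images. In particular
`x ≤ ¬¬x`, `∼̇∼̇x ≤ x` and `¬x ≤ ∼̇x`. With these, `¬∼x = ∼̇∼̇x` and `∼̇∼x = ¬¬x ∨ ∼̇∼̇x`, from
which `∼∼x = x` follows by distributivity; the De Morgan law for `∼` reduces, after
distributing, to (B9), (B10) and the inequality `∼̇x ∧ ¬y ≤ ∼̇(x ∨ y)`.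
-/

theorem antitone_of_map_sup_eq_inf {α β : Type*} [SemilatticeSup α] [SemilatticeInf β]
    {f : α → β} (h : ∀ x y, f (x ⊔ y) = f x ⊓ f y) : Antitone f :=
  fun x y hxy => inf_eq_right.1 (by rw [← h, sup_eq_right.2 hxy])

theorem antitone_of_map_inf_eq_sup {α β : Type*} [SemilatticeInf α] [SemilatticeSup β]
    {f : α → β} (h : ∀ x y, f (x ⊓ y) = f x ⊔ f y) : Antitone f :=
  fun x y hxy => sup_eq_left.1 (by rw [← h, inf_eq_left.2 hxy])

theorem sup_inf_sup_le_sup_sup_inf {α : Type*} [DistribLattice α] (x y a b : α) :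
    (x ⊔ a) ⊓ (y ⊔ b) ≤ x ⊔ y ⊔ a ⊓ b :=
  calc (x ⊔ a) ⊓ (y ⊔ b) ≤ (x ⊔ y ⊔ a) ⊓ (x ⊔ y ⊔ b) :=
        inf_le_inf (sup_le_sup_right le_sup_left a) (sup_le_sup_right le_sup_right b)
    _ = x ⊔ y ⊔ a ⊓ b := sup_inf_left _ _ _ |>.symm

section

variable {A : Type*} [DistribLattice A] [BoundedOrder A] {n s : A → A}

/-- The axioms (B1)–(B10), with `n` for `¬` and `s` for `∼̇`; `deMorganNeg n s` is `∼`. -/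
structure BAxioms (n s : A → A) : Prop where
  B1 : ∀ x, x ⊓ n x = ⊥
  B2 : ∀ x, x ⊔ s x = ⊤
  B3 : ∀ x, n x ⊓ s (n x) = ⊥
  B4 : ∀ x, s x ⊔ n (s x) = ⊤
  B5 : ∀ x y, s (x ⊓ y) = s x ⊔ s y
  B6 : ∀ x y, n (x ⊔ y) = n x ⊓ n y
  B7 : ∀ x y, n (x ⊓ n y) = n x ⊔ n (n y)
  B8 : ∀ x y, s (x ⊔ s y) = s x ⊓ s (s y)
  B9 : ∀ x y, (x ⊔ y) ⊓ s (x ⊔ y) ≤ x ⊔ n x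
  B10 : ∀ x y, x ⊓ s x ⊓ y ⊓ s y ≤ s (x ⊔ y)

def deMorganNeg (n s : A → A) (x : A) : A := (x ⊔ n x) ⊓ s x

namespace BAxioms

theorem n_sup_nn (h : BAxioms n s) (x : A) : n x ⊔ n (n x) = n ⊥ := by
  rw [← h.B7, h.B1]

theorem s_inf_ss (h : BAxioms n s) (x : A) : s x ⊓ s (s x) = s ⊤ := by
  rw [← h.B8, h.B2]

theorem s_bot (h : BAxioms n s) : s ⊥ = ⊤ := by
  simpa using h.B2 ⊥

theorem s_top (h : BAxioms n s) : s ⊤ = ⊥ := by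
  have h₁ : s ⊤ ≤ n ⊥ := by simpa [h.n_sup_nn] using h.B9 (n ⊥) ⊤
  have h₂ : s ⊤ ≤ s (n ⊥) := antitone_of_map_inf_eq_sup h.B5 le_top
  exact le_bot_iff.1 (h.B3 ⊥ ▸ le_inf h₁ h₂)

theorem n_bot (h : BAxioms n s) : n ⊥ = ⊤ := by
  simpa [h.s_top] using h.B4 ⊤

theorem isCompl_n_nn (h : BAxioms n s) (x : A) : IsCompl (n x) (n (n x)) :=
  .of_eq (h.B1 (n x)) (by rw [h.n_sup_nn, h.n_bot])

theorem isCompl_s_ss (h : BAxioms n s) (x : A) : IsCompl (s x) (s (s x)) :=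
  .of_eq (by rw [h.s_inf_ss, h.s_top]) (h.B2 (s x))

theorem isCompl_n_sn (h : BAxioms n s) (x : A) : IsCompl (n x) (s (n x)) :=
  .of_eq (h.B3 x) (h.B2 (n x))

theorem isCompl_s_ns (h : BAxioms n s) (x : A) : IsCompl (s x) (n (s x)) :=
  .of_eq (h.B1 (s x)) (h.B4 x)

theorem nn_eq_sn (h : BAxioms n s) (x : A) : n (n x) = s (n x) :=
  (h.isCompl_n_nn x).right_unique (h.isCompl_n_sn x)

theorem ss_eq_ns (h : BAxioms n s) (x : A) : s (s x) = n (s x) :=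
  (h.isCompl_s_ss x).right_unique (h.isCompl_s_ns x)

theorem ss_n (h : BAxioms n s) (x : A) : s (s (n x)) = n x :=
  (h.isCompl_s_ss (n x)).right_unique (h.isCompl_n_sn x).symm

theorem nn_s (h : BAxioms n s) (x : A) : n (n (s x)) = s x :=
  (h.isCompl_n_nn (s x)).right_unique (h.isCompl_s_ns x).symm

theorem s_nn (h : BAxioms n s) (x : A) : s (n (n x)) = n x := by
  rw [h.nn_eq_sn, h.ss_n]

theorem le_nn (h : BAxioms n s) (x : A) : x ≤ n (n x) :=
  (h.isCompl_n_nn x).le_right_iff.2 (disjoint_iff.2 (h.B1 x))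

theorem ss_le (h : BAxioms n s) (x : A) : s (s x) ≤ x :=
  (h.isCompl_s_ss x).right_le_iff.2 (codisjoint_iff.2 (h.B2 x))

theorem n_le_s (h : BAxioms n s) (x : A) : n x ≤ s x :=
  (h.isCompl_n_sn x).left_le_iff.2 <| codisjoint_iff.2 <| by
    rw [← h.B5, h.B1, h.s_bot]

theorem s_inf_n_le_s_sup (h : BAxioms n s) (x y : A) : s x ⊓ n y ≤ s (x ⊔ y) := by
  have : s (x ⊔ n (n y)) = s x ⊓ n y := by rw [h.nn_eq_sn, h.B8, h.ss_n]
  exact this ▸ antitone_of_map_inf_eq_sup h.B5 (sup_le_sup_left (h.le_nn y) x)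

theorem n_deMorganNeg (h : BAxioms n s) (x : A) : n (deMorganNeg n s x) = s (s x) := by
  rw [deMorganNeg, ← h.nn_s x, h.B7, h.B6, h.B1, bot_sup_eq, h.nn_s, h.ss_eq_ns]

theorem s_deMorganNeg (h : BAxioms n s) (x : A) :
    s (deMorganNeg n s x) = n (n x) ⊔ s (s x) := by
  have : s (x ⊔ n x) = s x ⊓ s (n x) := by rw [← h.s_nn x, h.B8, h.s_nn]
  rw [deMorganNeg, h.B5, this, sup_inf_right, h.B2, top_inf_eq, h.nn_eq_sn]

theorem deMorganNeg_inf_nn (h : BAxioms n s) (x : A) :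
    deMorganNeg n s x ⊓ n (n x) = x ⊓ s x := by
  rw [deMorganNeg, inf_right_comm, inf_sup_right, h.B1, sup_bot_eq, inf_eq_left.2 (h.le_nn x)]

theorem deMorganNeg_deMorganNeg (h : BAxioms n s) (x : A) :
    deMorganNeg n s (deMorganNeg n s x) = x := by
  rw [deMorganNeg, h.n_deMorganNeg, h.s_deMorganNeg, ← sup_inf_right, h.deMorganNeg_inf_nn,
    sup_inf_right, h.B2, inf_top_eq, sup_eq_left.2 (h.ss_le x)]

theorem deMorganNeg_sup_le (h : BAxioms n s) (x y : A) :
    deMorganNeg n s (x ⊔ y) ≤ deMorganNeg n s x := by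
  rw [deMorganNeg, deMorganNeg]
  refine le_inf ?_ (inf_le_right.trans (antitone_of_map_inf_eq_sup h.B5 le_sup_left))
  rw [inf_sup_right]
  exact sup_le (h.B9 x y) <|
    inf_le_left.trans <| (antitone_of_map_sup_eq_inf h.B6 le_sup_left).trans le_sup_right

theorem deMorganNeg_inf_le_s_sup (h : BAxioms n s) (x y : A) :
    deMorganNeg n s x ⊓ deMorganNeg n s y ≤ s (x ⊔ y) := by
  rw [deMorganNeg, deMorganNeg, inf_sup_right x, inf_sup_right y, inf_sup_left, inf_sup_right,
    inf_sup_right]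
  refine sup_le (sup_le ?_ ?_) (sup_le ?_ ?_)
  · exact le_of_eq (by ac_rfl) |>.trans (h.B10 x y)
  · exact le_inf (inf_le_right.trans inf_le_right) (inf_le_left.trans inf_le_left)
      |>.trans (sup_comm y x ▸ h.s_inf_n_le_s_sup y x)
  · exact le_inf (inf_le_left.trans inf_le_right) (inf_le_right.trans inf_le_left)
      |>.trans (h.s_inf_n_le_s_sup x y)
  · exact le_inf (inf_le_left.trans inf_le_left) (inf_le_right.trans inf_le_left)
      |>.trans ((h.B6 x y).symm.le.trans (h.n_le_s _))

theorem deMorganNeg_sup (h : BAxioms n s) (x y : A) :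
    deMorganNeg n s (x ⊔ y) = deMorganNeg n s x ⊓ deMorganNeg n s y := by
  refine le_antisymm (le_inf (h.deMorganNeg_sup_le x y) (sup_comm x y ▸ h.deMorganNeg_sup_le y x))
    (le_inf ?_ (h.deMorganNeg_inf_le_s_sup x y))
  rw [h.B6]
  exact (inf_le_inf inf_le_left inf_le_left).trans (sup_inf_sup_le_sup_sup_inf x y (n x) (n y))

theorem deMorganNeg_sup_nn (h : BAxioms n s) (x : A) : deMorganNeg n s x ⊔ n (n x) = ⊤ := by
  rw [deMorganNeg, sup_inf_right, sup_assoc, (h.isCompl_n_nn x).sup_eq_top, sup_top_eq,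
    top_inf_eq, h.nn_eq_sn, ← h.B5, h.B1, h.s_bot]

theorem inf_deMorganNeg (h : BAxioms n s) (x : A) :
    x ⊓ deMorganNeg n s x = deMorganNeg n s x ⊓ n (n x) := by
  rw [h.deMorganNeg_inf_nn, deMorganNeg, ← inf_assoc, inf_sup_self]

end BAxioms

end

theorem stmt {A : Type*} [DistribLattice A] [BoundedOrder A]
    (n s : A → A)
    (B1 : ∀ x : A, x ⊓ n x = ⊥)
    (B2 : ∀ x : A, x ⊔ s x = ⊤)
    (B3 : ∀ x : A, n x ⊓ s (n x) = ⊥)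
    (B4 : ∀ x : A, s x ⊔ n (s x) = ⊤)
    (B5 : ∀ x y : A, s (x ⊓ y) = s x ⊔ s y)
    (B6 : ∀ x y : A, n (x ⊔ y) = n x ⊓ n y)
    (B7 : ∀ x y : A, n (x ⊓ n y) = n x ⊔ n (n y))
    (B8 : ∀ x y : A, s (x ⊔ s y) = s x ⊓ s (s y))
    (B9 : ∀ x y : A, (x ⊔ y) ⊓ s (x ⊔ y) ≤ x ⊔ n x)
    (B10 : ∀ x y : A, x ⊓ s x ⊓ y ⊓ s y ≤ s (x ⊔ y))
    (m : A → A) (hm : ∀ x : A, m x = (x ⊔ n x) ⊓ s x)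
    (d : A → A) (hd : ∀ x : A, d x = n (n x)) :
    ∀ x y z : A, x ⊓ (x ⊔ y) = x ∧ x ⊓ (y ⊔ z) = (z ⊓ x) ⊔ (y ⊓ x) ∧ m (m x) = x ∧ m (x ⊔ y) = m x ⊓ m y ∧ m x ⊔ d x = ⊤ ∧ x ⊓ m x = m x ⊓ d x := by
  have h : BAxioms n s := ⟨B1, B2, B3, B4, B5, B6, B7, B8, B9, B10⟩
  obtain rfl : m = deMorganNeg n s := funext hm
  intro x y z
  simp only [hd]
  refine ⟨inf_sup_self, ?_, h.deMorganNeg_deMorganNeg x, h.deMorganNeg_sup x y,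
    h.deMorganNeg_sup_nn x, h.inf_deMorganNeg x⟩
  rw [inf_sup_left, inf_comm x y, inf_comm x z, sup_comm]
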